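/- Any operator C' : Set L → Set L satisfying conditions (a) and (b) is itself a finitary consequence operator: X ⊆ C'(X), C'(C'(X)) = C'(X), and C'(X) = ⋃ {C'(Z) | Z ⊆ X, Z finite} for all X. -/
import Mathlib


theorem stmt {L : Type*} (n : ℕ) (hn : 1 ≤ n) (a d b : Fin n → L)
    (hab : ∀ i k, a i ≠ b k) (hdb : ∀ i k, d i ≠ b k)
    (D : Fin n → Set L) (hD : ∀ i, D i = {a i, d i})
    (C' : Set L → Set L)
    (ha : ∀ X : Set L, (∀ i, ¬ D i ⊆ X) → C' X = X)
    (hb : ∀ X : Set L, (∃ k, D k ⊆ X) →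
      C' X = X ∪ {y | ∃ i, D i ⊆ X ∧ y = b i}) :
    ∀ X : Set L, X ⊆ C' X ∧ C' (C' X) = C' X ∧
      C' X = ⋃ Z ∈ {Z : Set L | Z ⊆ X ∧ Z.Finite}, C' Z := by
  have ext : ∀ X : Set L, X ⊆ C' X := by
    intro X
    by_cases h : ∃ k, D k ⊆ X
    · rw [hb X h]; exact Set.subset_union_left
    · rw [ha X (fun i hi => h ⟨i, hi⟩)]
  have mono : ∀ Z X : Set L, Z ⊆ X → C' Z ⊆ C' X := by
    intro Z X hZX
    by_cases h : ∃ k, D k ⊆ Z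
    · obtain ⟨k, hk⟩ := h
      rw [hb Z ⟨k, hk⟩, hb X ⟨k, hk.trans hZX⟩]
      apply Set.union_subset
      · exact hZX.trans Set.subset_union_left
      · rintro y ⟨i, hi, rfl⟩
        exact Set.subset_union_right ⟨i, hi.trans hZX, rfl⟩
    · rw [ha Z (fun i hi => h ⟨i, hi⟩)]
      exact hZX.trans (ext X)
  intro X
  refine ⟨ext X, ?_, ?_⟩
  · by_cases h : ∃ k, D k ⊆ X
    · obtain ⟨k, hk⟩ := h
      have hX := hb X ⟨k, hk⟩
      rw [hX, hb _ ⟨k, hk.trans Set.subset_union_left⟩, Set.union_eq_left]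
      rintro y ⟨i, hi, rfl⟩
      refine Or.inr ⟨i, ?_, rfl⟩
      intro x hx
      rcases hi hx with hx' | ⟨j, _, rfl⟩
      · exact hx'
      · rw [hD i] at hx
        rcases hx with h1 | h1
        · exact absurd h1.symm (hab i j)
        · exact absurd h1.symm (hdb i j)
    · rw [ha X (fun i hi => h ⟨i, hi⟩), ha X (fun i hi => h ⟨i, hi⟩)]
  · apply Set.Subset.antisymm
    · intro y hy
      by_cases h : ∃ k, D k ⊆ X
      · rw [hb X h] at hy
        rcases hy with hy | ⟨i, hi, rfl⟩
        · exact Set.mem_biUnion ⟨Set.singleton_subset_iff.2 hy,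
            Set.finite_singleton y⟩ (ext {y} rfl)
        · have hfin : (D i).Finite := by rw [hD i]; exact Set.toFinite _
          refine Set.mem_biUnion (show D i ∈ {Z : Set L | Z ⊆ X ∧ Z.Finite} from ⟨hi, hfin⟩) ?_
          rw [hb (D i) ⟨i, subset_rfl⟩]
          exact Or.inr ⟨i, subset_rfl, rfl⟩
      · rw [ha X (fun i hi => h ⟨i, hi⟩)] at hy
        exact Set.mem_biUnion ⟨Set.singleton_subset_iff.2 hy,
          Set.finite_singleton y⟩ (ext {y} rfl)
    · exact Set.iUnion₂_subset fun Z hZ => mono Z X hZ.1
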